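/- Over the max-plus semifield, let A be an n×n matrix, b a vector, d a regular vector, and Δ = Tr(A) ⊕ d⁻ A* b. If Δ ≤ 0, then every vector x = A* u with b ≤ u ≤ (d⁻ A*)⁻ and u regular satisfies both A x ⊕ b ≤ x and x ≤ d; and if Δ > 0, the system {A x ⊕ b ≤ x, x ≤ d} has no regular solution. -/

import Mathlib

/-!
If `Tr(A) ≤ 0`, every closed walk of length at most `n` has nonpositive weight, so cutting a
cycle out of a walk never lowers its weight; since a walk of length `n` on `n` vertices repeats
a vertex, `Aⁿ ≤ A*`, hence `A A* ≤ A*` and `x = A* u` satisfies `A x ≤ x`, while `b ≤ u ≤ x`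
and `x ≤ d` is the residuation `A* u ≤ d ↔ u ≤ (d⁻ A*)⁻`.
Conversely, a regular solution `x` of `A x ⊕ b ≤ x` satisfies `Aᵐ x ≤ x` for all `m`; reading
this on the diagonal gives `Tr(A) ≤ 0`, and it yields `A* b ≤ A* x ≤ x ≤ d`, so `Δ ≤ 0`.
-/

/-- Max-plus matrix–vector product: `(A x)_i = max_j (a_{ij} + x_j)`. -/
noncomputable def mpMulVec {n : ℕ} (A : Fin n → Fin n → EReal) (x : Fin n → EReal) :
    Fin n → EReal :=
  fun i => Finset.univ.sup fun j => A i j + x j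

/-- Max-plus matrix product. -/
noncomputable def mpMul {n : ℕ} (A B : Fin n → Fin n → EReal) :
    Fin n → Fin n → EReal :=
  fun i j => Finset.univ.sup fun k => A i k + B k j

/-- Max-plus identity matrix: `0` on the diagonal and `-∞` elsewhere. -/
noncomputable def mpId {n : ℕ} : Fin n → Fin n → EReal :=
  fun i j => if i = j then 0 else ⊥

/-- Max-plus matrix power. -/
noncomputable def mpPow {n : ℕ} (A : Fin n → Fin n → EReal) : ℕ → (Fin n → Fin n → EReal)
  | 0 => mpId
  | k + 1 => mpMul (mpPow A k) A

/-- Max-plus trace: maximum of the diagonal entries. -/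
noncomputable def mpTrace {n : ℕ} (A : Fin n → Fin n → EReal) : EReal :=
  Finset.univ.sup fun i => A i i

/-- `Tr(A) = tr A ⊕ tr A² ⊕ ⋯ ⊕ tr Aⁿ`. -/
noncomputable def mpTr {n : ℕ} (A : Fin n → Fin n → EReal) : EReal :=
  (Finset.Icc 1 n).sup fun k => mpTrace (mpPow A k)

/-- The Kleene star `A* = I ⊕ A ⊕ ⋯ ⊕ A^{n-1}`. -/
noncomputable def mpStar {n : ℕ} (A : Fin n → Fin n → EReal) :
    Fin n → Fin n → EReal :=
  fun i j => (Finset.range n).sup fun k => mpPow A k i j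

open Finset

namespace EReal

lemma finset_sup_add {ι : Type*} (s : Finset ι) (f : ι → EReal) (c : EReal) :
    s.sup f + c = s.sup fun i => f i + c :=
  apply_sup_eq_sup_comp_of_linearOrder (· + c) (fun _ _ h => add_le_add_left h c) (bot_add c)

lemma add_finset_sup {ι : Type*} (s : Finset ι) (f : ι → EReal) (c : EReal) :
    c + s.sup f = s.sup fun i => c + f i :=
  apply_sup_eq_sup_comp_of_linearOrder (c + ·) (fun _ _ h => add_le_add_right h c) (add_bot c)

lemma add_coe_le_coe_of_coe_le_neg {a : EReal} {u d : ℝ}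
    (h : (u : EReal) ≤ -(-(d : EReal) + a)) : a + u ≤ d := by
  induction a with
  | bot => simp
  | top => simp at h
  | coe a =>
    rw [← coe_neg, ← coe_add, ← coe_neg] at h
    rw [← coe_add]
    norm_cast at h ⊢
    linarith

lemma nonpos_of_add_coe_le_coe {a : EReal} {x : ℝ} (h : a + x ≤ x) : a ≤ 0 :=
  addLECancellable_coe x (by rwa [add_zero, add_comm])

lemma neg_coe_add_nonpos {y : EReal} {d : ℝ} (h : y ≤ d) : -(d : EReal) + y ≤ 0 := by
  grw [h]
  rw [← coe_neg, ← coe_add, neg_add_cancel, coe_zero]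

end EReal

section Algebra

variable {n : ℕ}

lemma add_le_mpMul (B C : Fin n → Fin n → EReal) (i k j : Fin n) :
    B i k + C k j ≤ mpMul B C i j :=
  Finset.le_sup (f := fun k => B i k + C k j) (mem_univ k)

lemma add_le_mpMulVec (M : Fin n → Fin n → EReal) (x : Fin n → EReal) (i j : Fin n) :
    M i j + x j ≤ mpMulVec M x i :=
  Finset.le_sup (f := fun j => M i j + x j) (mem_univ j)

lemma mpMulVec_mpMul (B C : Fin n → Fin n → EReal) (x : Fin n → EReal) :
    mpMulVec (mpMul B C) x = mpMulVec B (mpMulVec C x) := by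
  funext i
  calc mpMulVec (mpMul B C) x i
      = univ.sup fun j => univ.sup fun k => B i k + C k j + x j := by
        simp only [mpMulVec, mpMul, EReal.finset_sup_add]
    _ = univ.sup fun k => univ.sup fun j => B i k + (C k j + x j) := by
        rw [Finset.sup_comm]; simp only [add_assoc]
    _ = mpMulVec B (mpMulVec C x) i := by
        simp only [mpMulVec, EReal.add_finset_sup]

lemma mpMul_assoc (B C D : Fin n → Fin n → EReal) :
    mpMul (mpMul B C) D = mpMul B (mpMul C D) := by
  funext i j
  exact congrFun (mpMulVec_mpMul B C fun k => D k j) i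

lemma mpMulVec_mpId (x : Fin n → EReal) : mpMulVec mpId x = x := by
  funext i
  refine le_antisymm (Finset.sup_le fun k _ => ?_) ?_
  · by_cases hik : i = k <;> simp [mpId, hik]
  · simpa [mpId] using add_le_mpMulVec mpId x i i

lemma mpId_mpMul (B : Fin n → Fin n → EReal) : mpMul mpId B = B := by
  funext i j
  exact congrFun (mpMulVec_mpId fun k => B k j) i

lemma mpMul_mpId (B : Fin n → Fin n → EReal) : mpMul B mpId = B := by
  funext i j
  refine le_antisymm (Finset.sup_le fun k _ => ?_) ?_
  · by_cases hkj : k = j <;> simp [mpId, hkj]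
  · simpa [mpId] using add_le_mpMul B mpId i j j

lemma mpMulVec_mono {M N : Fin n → Fin n → EReal} {x y : Fin n → EReal}
    (hMN : ∀ i j, M i j ≤ N i j) (hxy : ∀ j, x j ≤ y j) (i : Fin n) :
    mpMulVec M x i ≤ mpMulVec N y i :=
  Finset.sup_le fun j _ => (add_le_add (hMN i j) (hxy j)).trans (add_le_mpMulVec N y i j)

lemma mpPow_add (A : Fin n → Fin n → EReal) (a b : ℕ) :
    mpPow A (a + b) = mpMul (mpPow A a) (mpPow A b) := by
  induction b with
  | zero => exact (mpMul_mpId _).symm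
  | succ b ih => rw [← add_assoc, mpPow, ih, mpMul_assoc, mpPow]

lemma mpPow_succ' (A : Fin n → Fin n → EReal) (m : ℕ) :
    mpPow A (m + 1) = mpMul A (mpPow A m) := by
  rw [add_comm, mpPow_add, mpPow, mpPow, mpId_mpMul]

end Algebra

section Walks

variable {n : ℕ} (A : Fin n → Fin n → EReal)

noncomputable def walkWeight (m : ℕ) (w : ℕ → Fin n) : EReal :=
  ∑ t ∈ range m, A (w t) (w (t + 1))

lemma walkWeight_add (a b : ℕ) (w : ℕ → Fin n) :
    walkWeight A (a + b) w = walkWeight A a w + walkWeight A b fun t => w (a + t) :=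
  sum_range_add _ a b

lemma walkWeight_le_mpPow (m : ℕ) (w : ℕ → Fin n) :
    walkWeight A m w ≤ mpPow A m (w 0) (w m) := by
  induction m with
  | zero => simp [walkWeight, mpPow, mpId]
  | succ m ih =>
    rw [walkWeight, sum_range_succ]
    exact (add_le_add_left ih _).trans (add_le_mpMul _ _ _ _ _)

lemma exists_walk_of_mpPow_ne_bot (m : ℕ) :
    ∀ i j, mpPow A m i j ≠ ⊥ →
      ∃ w : ℕ → Fin n, w 0 = i ∧ w m = j ∧ mpPow A m i j ≤ walkWeight A m w := by
  induction m with
  | zero =>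
    intro i j hij
    have : i = j := by by_contra h; simp [mpPow, mpId, h] at hij
    subst this
    exact ⟨fun _ => i, rfl, rfl, by simp [mpPow, mpId, walkWeight]⟩
  | succ m ih =>
    intro i j hij
    obtain ⟨k, -, hk⟩ :=
      exists_mem_eq_sup univ ⟨i, mem_univ i⟩ fun k => A i k + mpPow A m k j
    have hpow : mpPow A (m + 1) i j = A i k + mpPow A m k j := by
      rw [mpPow_succ']; exact hk
    rw [hpow] at hij ⊢
    obtain ⟨w, rfl, rfl, hw⟩ := ih _ j fun h => hij (by rw [h, EReal.add_bot])
    refine ⟨fun | 0 => i | t + 1 => w t, rfl, rfl, ?_⟩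
    rw [walkWeight, sum_range_succ', add_comm]
    exact add_le_add_left hw _

variable {A}

lemma mpPow_diag_nonpos (htr : mpTr A ≤ 0) {c : ℕ} (hc : 0 < c) (hcn : c ≤ n) (v : Fin n) :
    mpPow A c v v ≤ 0 :=
  calc mpPow A c v v ≤ mpTrace (mpPow A c) :=
        Finset.le_sup (f := fun i => mpPow A c i i) (mem_univ v)
    _ ≤ mpTr A := Finset.le_sup (f := fun k => mpTrace (mpPow A k)) (mem_Icc.mpr ⟨hc, hcn⟩)
    _ ≤ 0 := htr

lemma walkWeight_le_mpPow_of_cycle (htr : mpTr A ≤ 0) (w : ℕ → Fin n) {p c : ℕ} (r : ℕ)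
    (hc : 0 < c) (hcn : c ≤ n) (hw : w (p + c) = w p) :
    walkWeight A (p + c + r) w ≤ mpPow A (p + r) (w 0) (w (p + c + r)) := by
  have hpre := walkWeight_le_mpPow A p w
  have hcyc := walkWeight_le_mpPow A c fun t => w (p + t)
  have hsuf := walkWeight_le_mpPow A r fun t => w (p + c + t)
  simp only [add_zero, hw] at hcyc hsuf
  calc walkWeight A (p + c + r) w
      = walkWeight A p w + walkWeight A c (fun t => w (p + t))
          + walkWeight A r fun t => w (p + c + t) := by
        rw [walkWeight_add, walkWeight_add]
    _ ≤ mpPow A p (w 0) (w p) + 0 + mpPow A r (w p) (w (p + c + r)) :=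
        add_le_add (add_le_add hpre (hcyc.trans (mpPow_diag_nonpos htr hc hcn _))) hsuf
    _ ≤ mpPow A (p + r) (w 0) (w (p + c + r)) := by
        rw [add_zero, mpPow_add]; exact add_le_mpMul _ _ _ _ _

lemma mpPow_self_le_mpStar (htr : mpTr A ≤ 0) (i j : Fin n) :
    mpPow A n i j ≤ mpStar A i j := by
  rcases eq_or_ne (mpPow A n i j) ⊥ with hbot | hbot
  · simp [hbot]
  obtain ⟨w, rfl, rfl, hw⟩ := exists_walk_of_mpPow_ne_bot A n i j hbot
  -- pigeonhole: a walk of length `n` visits `n + 1` vertices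
  obtain ⟨a, b, hab, hwab⟩ :=
    Fintype.exists_ne_map_eq_of_card_lt (fun t : Fin (n + 1) => w t) (by simp)
  wlog hlt : a < b generalizing a b
  · exact this b a hab.symm hwab.symm (lt_of_le_of_ne (not_lt.mp hlt) hab.symm)
  have hb := b.isLt
  have hlt' : (a : ℕ) < b := hlt
  have hcut := walkWeight_le_mpPow_of_cycle htr w (p := a) (c := b - a) (n - b) (by omega)
    (by omega) (by rw [Nat.add_sub_cancel' hlt'.le]; exact hwab.symm)
  rw [show (a : ℕ) + (b - a) + (n - b) = n by omega] at hcut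
  calc mpPow A n (w 0) (w n) ≤ walkWeight A n w := hw
    _ ≤ mpPow A (a + (n - b)) (w 0) (w n) := hcut
    _ ≤ mpStar A (w 0) (w n) :=
        Finset.le_sup (f := fun k => mpPow A k (w 0) (w n)) (mem_range.mpr (by omega))

lemma mpPow_le_mpStar (htr : mpTr A ≤ 0) {m : ℕ} (hm : m ≤ n) (i j : Fin n) :
    mpPow A m i j ≤ mpStar A i j := by
  rcases hm.lt_or_eq with hm | rfl
  · exact Finset.le_sup (f := fun k => mpPow A k i j) (mem_range.mpr hm)
  · exact mpPow_self_le_mpStar htr i j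

end Walks

section Solutions

variable {n : ℕ} {A : Fin n → Fin n → EReal}

lemma mpMul_mpStar_le (htr : mpTr A ≤ 0) (i k : Fin n) :
    mpMul A (mpStar A) i k ≤ mpStar A i k := by
  refine Finset.sup_le fun j _ => ?_
  rw [mpStar, EReal.add_finset_sup]
  refine Finset.sup_le fun m hm => ?_
  calc A i j + mpPow A m j k ≤ mpPow A (m + 1) i k := by
        rw [mpPow_succ']; exact add_le_mpMul _ _ _ _ _
    _ ≤ mpStar A i k := mpPow_le_mpStar htr (mem_range.mp hm) i k

lemma le_mpMulVec_mpStar (x : Fin n → EReal) (i : Fin n) : x i ≤ mpMulVec (mpStar A) x i := by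
  have hdiag : (0 : EReal) ≤ mpStar A i i :=
    Finset.le_sup_of_le (f := fun k => mpPow A k i i) (mem_range.mpr i.pos) (by simp [mpPow, mpId])
  calc x i ≤ mpStar A i i + x i := le_add_of_nonneg_left hdiag
    _ ≤ mpMulVec (mpStar A) x i := add_le_mpMulVec _ _ _ _

lemma mpMulVec_le_of_le_neg_sup (M : Fin n → Fin n → EReal) {d u : Fin n → ℝ}
    (hu : ∀ j, (u j : EReal) ≤ -(univ.sup fun i => -(d i : EReal) + M i j)) (i : Fin n) :
    mpMulVec M (fun j => (u j : EReal)) i ≤ d i :=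
  Finset.sup_le fun j _ => EReal.add_coe_le_coe_of_coe_le_neg <| (hu j).trans <|
    EReal.neg_le_neg_iff.mpr (Finset.le_sup (f := fun i => -(d i : EReal) + M i j) (mem_univ i))

variable {x : Fin n → EReal}

lemma mpMulVec_mpPow_le (hx : ∀ i, mpMulVec A x i ≤ x i) (m : ℕ) (i : Fin n) :
    mpMulVec (mpPow A m) x i ≤ x i := by
  induction m generalizing i with
  | zero => rw [mpPow, mpMulVec_mpId]
  | succ m ih =>
    rw [mpPow, mpMulVec_mpMul]
    exact (mpMulVec_mono (fun _ _ => le_rfl) hx i).trans (ih i)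

lemma mpMulVec_mpStar_le (hx : ∀ i, mpMulVec A x i ≤ x i) (i : Fin n) :
    mpMulVec (mpStar A) x i ≤ x i := by
  refine Finset.sup_le fun j _ => ?_
  rw [mpStar, EReal.finset_sup_add]
  exact Finset.sup_le fun m _ => (add_le_mpMulVec _ _ _ _).trans (mpMulVec_mpPow_le hx m i)

lemma mpTr_nonpos_of_mpMulVec_le {y : Fin n → ℝ}
    (hy : ∀ i, mpMulVec A (fun j => (y j : EReal)) i ≤ y i) : mpTr A ≤ 0 :=
  Finset.sup_le fun m _ => Finset.sup_le fun i _ => EReal.nonpos_of_add_coe_le_coe <|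
    (add_le_mpMulVec _ _ i i).trans (mpMulVec_mpPow_le hy m i)

end Solutions

theorem stmt14_general {n : ℕ} (A : Fin n → Fin n → EReal)
    (b : Fin n → EReal) (d : Fin n → ℝ) :
    ((mpTr A ⊔ Finset.univ.sup
        (fun i => (-(d i : EReal)) + mpMulVec (mpStar A) b i)) ≤ 0 →
      ∀ u : Fin n → ℝ, (∀ j, b j ≤ (u j : EReal)) →
        (∀ j, (u j : EReal) ≤
            -(Finset.univ.sup fun i => (-(d i : EReal)) + mpStar A i j)) →
        (∀ i, mpMulVec A (mpMulVec (mpStar A) fun j => (u j : EReal)) i ⊔ b i ≤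
              mpMulVec (mpStar A) (fun j => (u j : EReal)) i) ∧
        (∀ i, mpMulVec (mpStar A) (fun j => (u j : EReal)) i ≤ (d i : EReal))) ∧
    (0 < (mpTr A ⊔ Finset.univ.sup
        (fun i => (-(d i : EReal)) + mpMulVec (mpStar A) b i)) →
      ¬ ∃ x : Fin n → ℝ,
          (∀ i, mpMulVec A (fun j => (x j : EReal)) i ⊔ b i ≤ (x i : EReal)) ∧
          (∀ i, (x i : EReal) ≤ (d i : EReal))) := by
  refine ⟨fun hΔ u hbu hud => ⟨fun i => sup_le ?_ ?_, mpMulVec_le_of_le_neg_sup _ hud⟩, ?_⟩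
  · have htr : mpTr A ≤ 0 := le_sup_left.trans hΔ
    rw [← mpMulVec_mpMul]
    exact mpMulVec_mono (mpMul_mpStar_le htr) (fun _ => le_rfl) i
  · exact (hbu i).trans (le_mpMulVec_mpStar (fun j => (u j : EReal)) i)
  · rintro hΔ ⟨x, hx, hxd⟩
    have hAx : ∀ i, mpMulVec A (fun j => (x j : EReal)) i ≤ x i :=
      fun i => le_sup_left.trans (hx i)
    have hstar_b : ∀ i, mpMulVec (mpStar A) b i ≤ d i := fun i =>
      (mpMulVec_mono (fun _ _ => le_rfl) (fun j => le_sup_right.trans (hx j)) i).trans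
        ((mpMulVec_mpStar_le hAx i).trans (hxd i))
    exact hΔ.not_ge <| sup_le (mpTr_nonpos_of_mpMulVec_le hAx)
      (Finset.sup_le fun i _ => EReal.neg_coe_add_nonpos (hstar_b i))

/-- Max-plus: for `Δ = Tr(A) ⊕ d⁻ A* b`: if `Δ ≤ 0` then every `x = A* u` with
`b ≤ u ≤ (d⁻ A*)⁻`, `u` regular, solves the system `A x ⊕ b ≤ x`, `x ≤ d`;
if `Δ > 0` the system has no regular solution. -/
theorem stmt14 {n : ℕ} (A : Fin n → Fin n → EReal) (hA : ∀ i j, A i j ≠ ⊤)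
    (b : Fin n → EReal) (hb : ∀ i, b i ≠ ⊤) (d : Fin n → ℝ) :
    ((mpTr A ⊔ Finset.univ.sup
        (fun i => (-(d i : EReal)) + mpMulVec (mpStar A) b i)) ≤ 0 →
      ∀ u : Fin n → ℝ, (∀ j, b j ≤ (u j : EReal)) →
        (∀ j, (u j : EReal) ≤
            -(Finset.univ.sup fun i => (-(d i : EReal)) + mpStar A i j)) →
        (∀ i, mpMulVec A (mpMulVec (mpStar A) fun j => (u j : EReal)) i ⊔ b i ≤
              mpMulVec (mpStar A) (fun j => (u j : EReal)) i) ∧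
        (∀ i, mpMulVec (mpStar A) (fun j => (u j : EReal)) i ≤ (d i : EReal))) ∧
    (0 < (mpTr A ⊔ Finset.univ.sup
        (fun i => (-(d i : EReal)) + mpMulVec (mpStar A) b i)) →
      ¬ ∃ x : Fin n → ℝ,
          (∀ i, mpMulVec A (fun j => (x j : EReal)) i ⊔ b i ≤ (x i : EReal)) ∧
          (∀ i, (x i : EReal) ≤ (d i : EReal))) :=
  stmt14_general A b d
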